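/- arXiv:2003.13950 — 4 statements merged into one kernel-verified Lean document; each statement's English description precedes it below -/
import Mathlib

section
/- Let U ⊆ ℝ³ be a simply connected open domain, φ: U → ℝ smooth with sin φ · cos φ ≠ 0 everywhere and satisfying the conformal-flatness system, and e^{−P} a positive smooth solution on U of equation (2.3.6). Then on U: (I^{x,y})_z = (I^{x,z})_y − φ_z tan φ · I^{x,y} + φ_y tan φ · I^{x,z} − φ_x cot φ · I^{y,z}. (Proposition 3.1, equation (1).) -/
noncomputable section


section Aux
variable {f g h : ℝ × ℝ × ℝ → ℝ} {p : ℝ × ℝ × ℝ}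

lemma Dv_contDiffAt (hf : ContDiffAt ℝ (⊤ : ℕ∞) f p) (v : ℝ × ℝ × ℝ) :
    ContDiffAt ℝ (⊤ : ℕ∞) (fun q => fderiv ℝ f q v) p := by
  have h1 : ContDiffAt ℝ (⊤ : ℕ∞) (fderiv ℝ f) p := hf.fderiv_right (by simp)
  exact ((ContinuousLinearMap.apply ℝ ℝ v).contDiff.contDiffAt).comp p h1

lemma Dv_diffAt (hf : ContDiffAt ℝ (⊤ : ℕ∞) f p) (v : ℝ × ℝ × ℝ) :
    DifferentiableAt ℝ (fun q => fderiv ℝ f q v) p :=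
  (Dv_contDiffAt hf v).differentiableAt (by simp)

lemma D_swap (hf : ContDiffAt ℝ (⊤ : ℕ∞) f p) (v w : ℝ × ℝ × ℝ) :
    fderiv ℝ (fun q => fderiv ℝ f q w) p v = fderiv ℝ (fun q => fderiv ℝ f q v) p w := by
  have hsymm := hf.isSymmSndFDerivAt (by rw [minSmoothness_of_isRCLikeNormedField]; exact WithTop.coe_le_coe.mpr (le_top : (2 : ℕ∞) ≤ ⊤))
  have hd : DifferentiableAt ℝ (fderiv ℝ f) p :=
    (hf.fderiv_right (m := 1) (WithTop.coe_le_coe.mpr le_top)).differentiableAt one_ne_zero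
  have h1 : HasFDerivAt (fun q => fderiv ℝ f q w)
      ((ContinuousLinearMap.apply ℝ ℝ w).comp (fderiv ℝ (fderiv ℝ f) p)) p :=
    (ContinuousLinearMap.apply ℝ ℝ w).hasFDerivAt.comp p hd.hasFDerivAt
  have h2 : HasFDerivAt (fun q => fderiv ℝ f q v)
      ((ContinuousLinearMap.apply ℝ ℝ v).comp (fderiv ℝ (fderiv ℝ f) p)) p :=
    (ContinuousLinearMap.apply ℝ ℝ v).hasFDerivAt.comp p hd.hasFDerivAt
  rw [h1.fderiv, h2.fderiv]
  simpa using hsymm v w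

lemma D_mul (hf : DifferentiableAt ℝ f p) (hg : DifferentiableAt ℝ g p) (v : ℝ × ℝ × ℝ) :
    fderiv ℝ (fun q => f q * g q) p v
      = fderiv ℝ f p v * g p + f p * fderiv ℝ g p v := by
  rw [fderiv_fun_mul hf hg]
  simp [ContinuousLinearMap.add_apply, ContinuousLinearMap.smul_apply, smul_eq_mul]
  ring

lemma D_mul3 (hf : DifferentiableAt ℝ f p) (hg : DifferentiableAt ℝ g p)
    (hh : DifferentiableAt ℝ h p) (v : ℝ × ℝ × ℝ) :
    fderiv ℝ (fun q => f q * g q * h q) p v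
      = fderiv ℝ f p v * g p * h p + f p * fderiv ℝ g p v * h p
        + f p * g p * fderiv ℝ h p v := by
  rw [D_mul (hf.fun_mul hg) hh, D_mul hf hg]
  ring

lemma D_add (hf : DifferentiableAt ℝ f p) (hg : DifferentiableAt ℝ g p) (v : ℝ × ℝ × ℝ) :
    fderiv ℝ (fun q => f q + g q) p v = fderiv ℝ f p v + fderiv ℝ g p v := by
  rw [fderiv_fun_add hf hg]; simp

lemma D_sub (hf : DifferentiableAt ℝ f p) (hg : DifferentiableAt ℝ g p) (v : ℝ × ℝ × ℝ) :
    fderiv ℝ (fun q => f q - g q) p v = fderiv ℝ f p v - fderiv ℝ g p v := by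
  rw [fderiv_fun_sub hf hg]; simp

lemma D_tan (hφ : DifferentiableAt ℝ f p) (hc : Real.cos (f p) ≠ 0) (v : ℝ × ℝ × ℝ) :
    fderiv ℝ (fun q => Real.tan (f q)) p v = fderiv ℝ f p v / Real.cos (f p) ^ 2 := by
  have h2 : HasFDerivAt (fun q => Real.tan (f q)) ((1 / Real.cos (f p) ^ 2) • fderiv ℝ f p) p :=
    (Real.hasDerivAt_tan hc).comp_hasFDerivAt p hφ.hasFDerivAt
  rw [h2.fderiv]
  simp [smul_eq_mul]
  ring

lemma hasDerivAt_cot {x : ℝ} (hs : Real.sin x ≠ 0) :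
    HasDerivAt Real.cot (-(1 / Real.sin x ^ 2)) x := by
  have hdiv : HasDerivAt (fun y => Real.cos y / Real.sin y)
      ((-Real.sin x * Real.sin x - Real.cos x * Real.cos x) / Real.sin x ^ 2) x :=
    (Real.hasDerivAt_cos x).div (Real.hasDerivAt_sin x) hs
  have hfun : Real.cot = fun y => Real.cos y / Real.sin y := funext fun y => Real.cot_eq_cos_div_sin y
  rw [hfun]
  convert hdiv using 1
  have := Real.sin_sq_add_cos_sq x
  field_simp
  nlinarith [Real.sin_sq_add_cos_sq x]

lemma D_cot (hφ : DifferentiableAt ℝ f p) (hs : Real.sin (f p) ≠ 0) (v : ℝ × ℝ × ℝ) :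
    fderiv ℝ (fun q => Real.cot (f q)) p v = -(fderiv ℝ f p v / Real.sin (f p) ^ 2) := by
  have h2 : HasFDerivAt (fun q => Real.cot (f q)) ((-(1 / Real.sin (f p) ^ 2)) • fderiv ℝ f p) p :=
    (hasDerivAt_cot hs).comp_hasFDerivAt p hφ.hasFDerivAt
  rw [h2.fderiv]
  simp [smul_eq_mul]
  ring

lemma diffAt_tan_comp (hφ : DifferentiableAt ℝ f p) (hc : Real.cos (f p) ≠ 0) :
    DifferentiableAt ℝ (fun q => Real.tan (f q)) p :=
  (Real.differentiableAt_tan.mpr hc).comp p hφ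

lemma diffAt_cot_comp (hφ : DifferentiableAt ℝ f p) (hs : Real.sin (f p) ≠ 0) :
    DifferentiableAt ℝ (fun q => Real.cot (f q)) p :=
  (hasDerivAt_cot hs).differentiableAt.comp p hφ

end Aux



open Real
open scoped RealInnerProductSpace

/-- Partial derivative in the `x`-direction of a map on `ℝ³ = ℝ × ℝ × ℝ`. -/
def px {E : Type*} [NormedAddCommGroup E] [NormedSpace ℝ E]
    (f : ℝ × ℝ × ℝ → E) : ℝ × ℝ × ℝ → E := fun p => fderiv ℝ f p (1, 0, 0)

/-- Partial derivative in the `y`-direction of a map on `ℝ³ = ℝ × ℝ × ℝ`. -/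
def py {E : Type*} [NormedAddCommGroup E] [NormedSpace ℝ E]
    (f : ℝ × ℝ × ℝ → E) : ℝ × ℝ × ℝ → E := fun p => fderiv ℝ f p (0, 1, 0)

/-- Partial derivative in the `z`-direction of a map on `ℝ³ = ℝ × ℝ × ℝ`. -/
def pz {E : Type*} [NormedAddCommGroup E] [NormedSpace ℝ E]
    (f : ℝ × ℝ × ℝ → E) : ℝ × ℝ × ℝ → E := fun p => fderiv ℝ f p (0, 0, 1)

/-- The conformal-flatness system (i)–(iv) for `φ` on `U`. -/
def ConformalFlatSystem (U : Set (ℝ × ℝ × ℝ)) (φ : ℝ × ℝ × ℝ → ℝ) : Prop :=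
  ∀ p ∈ U,
    (pz (py (px φ)) p + px φ p * pz (py φ) p * tan (φ p)
        - py φ p * pz (px φ) p * cot (φ p) = 0) ∧
    ((px (px (px φ)) p - px (py (py φ)) p + px (pz (pz φ)) p) / 2
        - ((px (px φ) p - py (py φ) p) * cos (2 * φ p) - pz (pz φ) p) / sin (2 * φ p) * px φ p
        - pz (px φ) p * pz φ p * cot (φ p) = 0) ∧
    ((py (px (px φ)) p - py (py (py φ)) p - py (pz (pz φ)) p) / 2
        - ((px (px φ) p - py (py φ) p) * cos (2 * φ p) - pz (pz φ) p) / sin (2 * φ p) * py φ p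
        - pz (py φ) p * pz φ p * tan (φ p) = 0) ∧
    ((pz (px (px φ)) p + pz (py (py φ)) p + pz (pz (pz φ)) p) / 2
        + (px (px φ) p - py (py φ) p - pz (pz φ) p * cos (2 * φ p)) / sin (2 * φ p) * pz φ p
        - px φ p * pz (px φ) p * cot (φ p) + py φ p * pz (py φ) p * tan (φ p) = 0)

/-- `ψ_{zz}`, defined from `φ` alone. -/
def psiZZ (φ : ℝ × ℝ × ℝ → ℝ) : ℝ × ℝ × ℝ → ℝ := fun p =>
  (px (px φ) p - py (py φ) p - pz (pz φ) p * cos (2 * φ p)) / sin (2 * φ p)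

/-- Equation (2.3.6): linear evolution equation for `E = e^{−P}` on `U`. -/
def Eq236 (U : Set (ℝ × ℝ × ℝ)) (φ E : ℝ × ℝ × ℝ → ℝ) : Prop :=
  ∀ p ∈ U,
    pz (pz E) p =
      (px (px E) p + 2 * px φ p * tan (φ p) * px E p)
      + (py (py E) p - 2 * py φ p * cot (φ p) * py E p)
      + (1 - 2 * psiZZ φ p) * E p

/-- The third principal curvature `κ₃` defined from `φ` and `E = e^{−P}`. -/
def kappa3 (φ E : ℝ × ℝ × ℝ → ℝ) : ℝ × ℝ × ℝ → ℝ := fun p =>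
  tan (φ p) * px (px E) p - px φ p * (cos (2 * φ p) / cos (φ p) ^ 2) * px E p
  - cot (φ p) * py (py E) p + py φ p * (cos (2 * φ p) / sin (φ p) ^ 2) * py E p
  + E p * pz (pz φ) p - pz E p * pz φ p

/-- `κ₁ = e^{−P} tan φ + κ₃`. -/
def kappa1 (φ E : ℝ × ℝ × ℝ → ℝ) : ℝ × ℝ × ℝ → ℝ := fun p =>
  E p * tan (φ p) + kappa3 φ E p

/-- `κ₂ = −e^{−P} cot φ + κ₃`. -/
def kappa2 (φ E : ℝ × ℝ × ℝ → ℝ) : ℝ × ℝ × ℝ → ℝ := fun p =>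
  -(E p * cot (φ p)) + kappa3 φ E p

/-- `I^{x,y}`. -/
def Ixy (φ E : ℝ × ℝ × ℝ → ℝ) : ℝ × ℝ × ℝ → ℝ := fun p =>
  py (px E) p - py E p * px φ p * cot (φ p) + px E p * py φ p * tan (φ p)

/-- `I^{x,z}`. -/
def Ixz (φ E : ℝ × ℝ × ℝ → ℝ) : ℝ × ℝ × ℝ → ℝ := fun p =>
  px (pz E) p + px E p * pz φ p * tan (φ p) - E p * px (pz φ) p * cot (φ p)

/-- `I^{y,z}`. -/
def Iyz (φ E : ℝ × ℝ × ℝ → ℝ) : ℝ × ℝ × ℝ → ℝ := fun p =>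
  py (pz E) p - py E p * pz φ p * cot (φ p) + E p * py (pz φ) p * tan (φ p)

/-- `ζ`, defined from `φ` and `E = e^{−P}`. -/
def zeta (φ E : ℝ × ℝ × ℝ → ℝ) : ℝ × ℝ × ℝ → ℝ := fun p =>
  E p * ((px (px E) p + 2 * px φ p * tan (φ p) * px E p)
      + (py (py E) p - 2 * py φ p * cot (φ p) * py E p)
      + (pz (pz E) p + pz φ p ^ 2 * E p))
  - ((px E p) ^ 2 / cos (φ p) ^ 2 + (py E p) ^ 2 / sin (φ p) ^ 2 + (pz E p) ^ 2)

/-- `J = ζ − κ₃²`. -/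
def Jfun (φ E : ℝ × ℝ × ℝ → ℝ) : ℝ × ℝ × ℝ → ℝ := fun p =>
  zeta φ E p - kappa3 φ E p ^ 2

set_option maxHeartbeats 2000000 in
/-- Proposition 3.1, equation (1). -/
theorem stmt_2 (U : Set (ℝ × ℝ × ℝ)) (hUopen : IsOpen U) (hUconn : IsConnected U)
    (hUsc : SimplyConnectedSpace U)
    (φ : ℝ × ℝ × ℝ → ℝ) (hφ : ContDiffOn ℝ (⊤ : ℕ∞) φ U)
    (hreg : ∀ p ∈ U, sin (φ p) * cos (φ p) ≠ 0)
    (hcfs : ConformalFlatSystem U φ)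
    (E : ℝ × ℝ × ℝ → ℝ) (hE : ContDiffOn ℝ (⊤ : ℕ∞) E U) (hEpos : ∀ p ∈ U, 0 < E p)
    (h236 : Eq236 U φ E) :
    ∀ p ∈ U,
      pz (Ixy φ E) p =
        py (Ixz φ E) p - pz φ p * tan (φ p) * Ixy φ E p
          + py φ p * tan (φ p) * Ixz φ E p - px φ p * cot (φ p) * Iyz φ E p := by
  intro p hp
  have hmem : U ∈ nhds p := hUopen.mem_nhds hp
  have hφp : ContDiffAt ℝ (⊤ : ℕ∞) φ p := hφ.contDiffAt hmem
  have hEp : ContDiffAt ℝ (⊤ : ℕ∞) E p := hE.contDiffAt hmem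
  have hs : Real.sin (φ p) ≠ 0 := fun h => hreg p hp (by rw [h]; ring)
  have hc : Real.cos (φ p) ≠ 0 := fun h => hreg p hp (by rw [h]; ring)
  have hdφ : DifferentiableAt ℝ φ p := hφp.differentiableAt (by simp)
  have hdE : DifferentiableAt ℝ E p := hEp.differentiableAt (by simp)
  have hEx : DifferentiableAt ℝ (fun q => fderiv ℝ E q (1,0,0)) p := Dv_diffAt hEp _
  have hEy : DifferentiableAt ℝ (fun q => fderiv ℝ E q (0,1,0)) p := Dv_diffAt hEp _
  have hEz : DifferentiableAt ℝ (fun q => fderiv ℝ E q (0,0,1)) p := Dv_diffAt hEp _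
  have hφx : DifferentiableAt ℝ (fun q => fderiv ℝ φ q (1,0,0)) p := Dv_diffAt hφp _
  have hφy : DifferentiableAt ℝ (fun q => fderiv ℝ φ q (0,1,0)) p := Dv_diffAt hφp _
  have hφz : DifferentiableAt ℝ (fun q => fderiv ℝ φ q (0,0,1)) p := Dv_diffAt hφp _
  have hExy : DifferentiableAt ℝ
      (fun q => fderiv ℝ (fun r => fderiv ℝ E r (1,0,0)) q (0,1,0)) p :=
    Dv_diffAt (Dv_contDiffAt hEp _) _
  have hEzx : DifferentiableAt ℝ
      (fun q => fderiv ℝ (fun r => fderiv ℝ E r (0,0,1)) q (1,0,0)) p :=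
    Dv_diffAt (Dv_contDiffAt hEp _) _
  have hφzx : DifferentiableAt ℝ
      (fun q => fderiv ℝ (fun r => fderiv ℝ φ r (0,0,1)) q (1,0,0)) p :=
    Dv_diffAt (Dv_contDiffAt hφp _) _
  have htan : DifferentiableAt ℝ (fun q => Real.tan (φ q)) p := diffAt_tan_comp hdφ hc
  have hcot : DifferentiableAt ℝ (fun q => Real.cot (φ q)) p := diffAt_cot_comp hdφ hs
  -- third order swaps
  have hevE : (fun q => fderiv ℝ (fun r => fderiv ℝ E r (0,0,1)) q (1,0,0))
      =ᶠ[nhds p] (fun q => fderiv ℝ (fun r => fderiv ℝ E r (1,0,0)) q (0,0,1)) := by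
    filter_upwards [hmem] with q hq
    exact D_swap (hE.contDiffAt (hUopen.mem_nhds hq)) (1,0,0) (0,0,1)
  have hevφ : (fun q => fderiv ℝ (fun r => fderiv ℝ φ r (0,0,1)) q (1,0,0))
      =ᶠ[nhds p] (fun q => fderiv ℝ (fun r => fderiv ℝ φ r (1,0,0)) q (0,0,1)) := by
    filter_upwards [hmem] with q hq
    exact D_swap (hφ.contDiffAt (hUopen.mem_nhds hq)) (1,0,0) (0,0,1)
  have hE3 : fderiv ℝ (fun q => fderiv ℝ (fun r => fderiv ℝ E r (0,0,1)) q (1,0,0)) p (0,1,0)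
      = fderiv ℝ (fun q => fderiv ℝ (fun r => fderiv ℝ E r (1,0,0)) q (0,1,0)) p (0,0,1) := by
    rw [hevE.fderiv_eq]
    exact D_swap (Dv_contDiffAt hEp _) (0,1,0) (0,0,1)
  have hφ3 : fderiv ℝ (fun q => fderiv ℝ (fun r => fderiv ℝ φ r (0,0,1)) q (1,0,0)) p (0,1,0)
      = fderiv ℝ (fun q => fderiv ℝ (fun r => fderiv ℝ φ r (1,0,0)) q (0,1,0)) p (0,0,1) := by
    rw [hevφ.fderiv_eq]
    exact D_swap (Dv_contDiffAt hφp _) (0,1,0) (0,0,1)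
  have hsw1 : fderiv ℝ (fun q => fderiv ℝ E q (0,0,1)) p (0,1,0)
      = fderiv ℝ (fun q => fderiv ℝ E q (0,1,0)) p (0,0,1) := D_swap hEp _ _
  have hsw2 : fderiv ℝ (fun q => fderiv ℝ E q (0,0,1)) p (1,0,0)
      = fderiv ℝ (fun q => fderiv ℝ E q (1,0,0)) p (0,0,1) := D_swap hEp _ _
  have hsw3 : fderiv ℝ (fun q => fderiv ℝ φ q (0,0,1)) p (0,1,0)
      = fderiv ℝ (fun q => fderiv ℝ φ q (0,1,0)) p (0,0,1) := D_swap hφp _ _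
  have hsw4 : fderiv ℝ (fun q => fderiv ℝ φ q (0,0,1)) p (1,0,0)
      = fderiv ℝ (fun q => fderiv ℝ φ q (1,0,0)) p (0,0,1) := D_swap hφp _ _
  have hi := (hcfs p hp).1
  replace hi : fderiv ℝ (fun q => fderiv ℝ (fun r => fderiv ℝ φ r (1,0,0)) q (0,1,0)) p (0,0,1)
      + fderiv ℝ φ p (1,0,0) * fderiv ℝ (fun q => fderiv ℝ φ q (0,1,0)) p (0,0,1) * Real.tan (φ p)
      - fderiv ℝ φ p (0,1,0) * fderiv ℝ (fun q => fderiv ℝ φ q (1,0,0)) p (0,0,1) * Real.cot (φ p)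
      = 0 := hi
  show fderiv ℝ (fun q => fderiv ℝ (fun r => fderiv ℝ E r (1,0,0)) q (0,1,0)
        - fderiv ℝ E q (0,1,0) * fderiv ℝ φ q (1,0,0) * Real.cot (φ q)
        + fderiv ℝ E q (1,0,0) * fderiv ℝ φ q (0,1,0) * Real.tan (φ q)) p (0,0,1)
    = fderiv ℝ (fun q => fderiv ℝ (fun r => fderiv ℝ E r (0,0,1)) q (1,0,0)
        + fderiv ℝ E q (1,0,0) * fderiv ℝ φ q (0,0,1) * Real.tan (φ q)
        - E q * fderiv ℝ (fun r => fderiv ℝ φ r (0,0,1)) q (1,0,0) * Real.cot (φ q)) p (0,1,0)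
      - fderiv ℝ φ p (0,0,1) * Real.tan (φ p) *
        (fderiv ℝ (fun q => fderiv ℝ E q (1,0,0)) p (0,1,0)
          - fderiv ℝ E p (0,1,0) * fderiv ℝ φ p (1,0,0) * Real.cot (φ p)
          + fderiv ℝ E p (1,0,0) * fderiv ℝ φ p (0,1,0) * Real.tan (φ p))
      + fderiv ℝ φ p (0,1,0) * Real.tan (φ p) *
        (fderiv ℝ (fun q => fderiv ℝ E q (0,0,1)) p (1,0,0)
          + fderiv ℝ E p (1,0,0) * fderiv ℝ φ p (0,0,1) * Real.tan (φ p)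
          - E p * fderiv ℝ (fun q => fderiv ℝ φ q (0,0,1)) p (1,0,0) * Real.cot (φ p))
      - fderiv ℝ φ p (1,0,0) * Real.cot (φ p) *
        (fderiv ℝ (fun q => fderiv ℝ E q (0,0,1)) p (0,1,0)
          - fderiv ℝ E p (0,1,0) * fderiv ℝ φ p (0,0,1) * Real.cot (φ p)
          + E p * fderiv ℝ (fun q => fderiv ℝ φ q (0,0,1)) p (0,1,0) * Real.tan (φ p))
  rw [D_add (hExy.fun_sub ((hEy.fun_mul hφx).fun_mul hcot)) ((hEx.fun_mul hφy).fun_mul htan) (0,0,1)]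
  rw [D_sub hExy ((hEy.fun_mul hφx).fun_mul hcot) (0,0,1)]
  rw [D_mul3 hEy hφx hcot (0,0,1), D_mul3 hEx hφy htan (0,0,1)]
  rw [D_sub (hEzx.fun_add ((hEx.fun_mul hφz).fun_mul htan)) ((hdE.fun_mul hφzx).fun_mul hcot) (0,1,0)]
  rw [D_add hEzx ((hEx.fun_mul hφz).fun_mul htan) (0,1,0)]
  rw [D_mul3 hEx hφz htan (0,1,0), D_mul3 hdE hφzx hcot (0,1,0)]
  rw [D_cot hdφ hs (0,0,1), D_tan hdφ hc (0,0,1), D_cot hdφ hs (0,1,0), D_tan hdφ hc (0,1,0)]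
  rw [hE3, hφ3, hsw1, hsw2, hsw3, hsw4]
  rw [Real.tan_eq_sin_div_cos, Real.cot_eq_cos_div_sin] at hi ⊢
  have pyth := Real.sin_sq_add_cos_sq (φ p)
  set s := Real.sin (φ p)
  set c := Real.cos (φ p)
  set e := E p
  set A := fderiv ℝ E p (1,0,0)
  set B := fderiv ℝ E p (0,1,0)
  set C := fderiv ℝ φ p (1,0,0)
  set D := fderiv ℝ φ p (0,1,0)
  set Z := fderiv ℝ φ p (0,0,1)
  set W := fderiv ℝ E p (0,0,1)
  set Exy := fderiv ℝ (fun q => fderiv ℝ E q (1,0,0)) p (0,1,0)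
  set Exz := fderiv ℝ (fun q => fderiv ℝ E q (1,0,0)) p (0,0,1)
  set Eyz := fderiv ℝ (fun q => fderiv ℝ E q (0,1,0)) p (0,0,1)
  set Fxz := fderiv ℝ (fun q => fderiv ℝ φ q (1,0,0)) p (0,0,1)
  set Fyz := fderiv ℝ (fun q => fderiv ℝ φ q (0,1,0)) p (0,0,1)
  set E3 := fderiv ℝ (fun q => fderiv ℝ (fun r => fderiv ℝ E r (1,0,0)) q (0,1,0)) p (0,0,1)
  set F3 := fderiv ℝ (fun q => fderiv ℝ (fun r => fderiv ℝ φ r (1,0,0)) q (0,1,0)) p (0,0,1)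
  have hF3 : F3 = D * Fxz * (c/s) - C * Fyz * (s/c) := by linear_combination hi
  rw [hF3]
  field_simp
  linear_combination (c^2 * (e * D * Fxz - B * C * Z)) * pyth
end
end

section
/- Let J ⊆ ℝ be an interval containing 0, σ: J → ℝ a continuously differentiable function, c₀ ∈ ℝ, and X₁: J → ℝ a twice continuously differentiable function satisfying X₁'' + (1 + σ²) X₁ − σ X₂ = 0 on J, where X₂(x) := ∫₀ˣ σ'(t) X₁(t) dt + c₀. Then the function G := (σ X₁ − X₂)² + X₁² + (X₁')² is constant on J. (Constancy of G in Example 1 of Section 3.) -/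
/-!
Along a solution, `G` is an energy: with `Y = X₁'` and `Z = σ X₁ - X₂`, the equations read
`X₁' = Y`, `Y' = σ X₂ - (1 + σ²) X₁ = -X₁ - σ Z` and `Z' = σ Y` (as `X₂' = σ' X₁`), so
`G = Z² + X₁² + Y²` has derivative `2 (σ Z Y + X₁ Y - Y X₁ - σ Y Z) = 0`, and a function with
vanishing derivative on an open interval is constant.
-/

noncomputable section

open Real

theorem hasDerivAt_integral_of_continuousOn {E : Type*} [NormedAddCommGroup E]
    [NormedSpace ℝ E] [CompleteSpace E] {J : Set ℝ} (hJopen : IsOpen J) (hJint : J.OrdConnected)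
    {f : ℝ → E} (hf : ContinuousOn f J) {a x : ℝ} (ha : a ∈ J) (hx : x ∈ J) :
    HasDerivAt (fun y => ∫ t in a..y, f t) (f x) x :=
  intervalIntegral.integral_hasDerivAt_right
    ((hf.mono (hJint.uIcc_subset ha hx)).intervalIntegrable)
    ⟨J, hJopen.mem_nhds hx, hf.aestronglyMeasurable hJopen.measurableSet⟩
    (hf.continuousAt (hJopen.mem_nhds hx))

theorem hasDerivAt_energy_eq_zero {σ X Y Z : ℝ → ℝ} {x σ' : ℝ} (hσ : HasDerivAt σ σ' x)
    (hX : HasDerivAt X (Y x) x) (hY : HasDerivAt Y (σ x * Z x - (1 + σ x ^ 2) * X x) x)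
    (hZ : HasDerivAt Z (σ' * X x) x) :
    HasDerivAt (fun t => (σ t * X t - Z t) ^ 2 + X t ^ 2 + Y t ^ 2) 0 x := by
  refine ((((hσ.mul hX).sub hZ).pow 2).add (hX.pow 2) |>.add (hY.pow 2)).congr_deriv ?_
  simp only [Pi.sub_apply, Pi.mul_apply, Nat.cast_ofNat, Nat.add_one_sub_one, pow_one]
  ring

theorem IsOpen.is_const_of_hasDerivAt_zero {J : Set ℝ} (hJopen : IsOpen J)
    (hJint : J.OrdConnected) {G : ℝ → ℝ} (hG : ∀ x ∈ J, HasDerivAt G 0 x) :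
    ∀ x ∈ J, ∀ x' ∈ J, G x = G x' := fun _ hx _ hx' =>
  hJopen.is_const_of_deriv_eq_zero hJint.isPreconnected
    (fun y hy => (hG y hy).differentiableAt.differentiableWithinAt)
    (fun y hy => (hG y hy).deriv) hx hx'

/-- Constancy of `G` in Example 1 of Section 3. -/
theorem stmt_7 (J : Set ℝ) (hJopen : IsOpen J) (hJint : J.OrdConnected) (h0 : (0 : ℝ) ∈ J)
    (σ : ℝ → ℝ) (hσ : ContDiffOn ℝ 1 σ J)
    (c₀ : ℝ)
    (X₁ : ℝ → ℝ) (hX₁ : ContDiffOn ℝ 2 X₁ J)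
    (X₂ : ℝ → ℝ) (hX₂ : ∀ x ∈ J, X₂ x = (∫ t in (0 : ℝ)..x, deriv σ t * X₁ t) + c₀)
    (hODE : ∀ x ∈ J, deriv (deriv X₁) x + (1 + σ x ^ 2) * X₁ x - σ x * X₂ x = 0)
    (G : ℝ → ℝ)
    (hG : G = fun x => (σ x * X₁ x - X₂ x) ^ 2 + X₁ x ^ 2 + deriv X₁ x ^ 2) :
    ∀ x ∈ J, ∀ x' ∈ J, G x = G x' := by
  subst hG
  have hX₁' : ContDiffOn ℝ 1 (deriv X₁) J := hX₁.deriv_of_isOpen hJopen (by norm_num)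
  have hσX₁ : ContinuousOn (fun t => deriv σ t * X₁ t) J :=
    (hσ.continuousOn_deriv_of_isOpen hJopen le_rfl).mul hX₁.continuousOn
  refine hJopen.is_const_of_hasDerivAt_zero hJint fun x hx => ?_
  have hxJ : J ∈ nhds x := hJopen.mem_nhds hx
  have hX₂' : HasDerivAt X₂ (deriv σ x * X₁ x) x :=
    ((hasDerivAt_integral_of_continuousOn hJopen hJint hσX₁ h0 hx).add_const c₀)
      |>.congr_of_eventuallyEq (Filter.eventually_of_mem hxJ hX₂)
  refine hasDerivAt_energy_eq_zero
    ((hσ.differentiableOn one_ne_zero).differentiableAt hxJ).hasDerivAt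
    ((hX₁.differentiableOn two_ne_zero).differentiableAt hxJ).hasDerivAt ?_ hX₂'
  have hX₁'' : deriv (deriv X₁) x = σ x * X₂ x - (1 + σ x ^ 2) * X₁ x := by linarith [hODE x hx]
  exact hX₁'' ▸ ((hX₁'.differentiableOn one_ne_zero).differentiableAt hxJ).hasDerivAt
end
end

section
/- Let ρ be a smooth real function on an interval J ⊆ ℝ, and let Y₁, Y₂ be smooth real functions on J satisfying: Y₂ = −e^{−ρ} Y₁'' + ρ' e^{−ρ} ((1 − e^{2ρ})/(1 + e^{2ρ})) Y₁' − ((ρ'' + ρ'²/(1 + e^{2ρ})) · e^{ρ}/(1 + e^{2ρ}) − e^{ρ}) Y₁ and Y₂' = (e^{ρ} Y₁)' + e^{−ρ} Y₁'. Then the function H := Y₂² + (e^{−ρ} √(1 + e^{2ρ}) · Y₁' + (ρ' e^{ρ}/√(1 + e^{2ρ})) · Y₁)² − (1 + e^{2ρ}) Y₁² is constant on J. (Constancy of H in Example 1 of Section 3.) -/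
noncomputable section

open Real

/-- Constancy of `H` in Example 1 of Section 3. -/
theorem stmt_8 (J : Set ℝ) (hJopen : IsOpen J) (hJint : J.OrdConnected)
    (ρ : ℝ → ℝ) (hρ : ContDiffOn ℝ (⊤ : ℕ∞) ρ J)
    (Y₁ Y₂ : ℝ → ℝ) (hY₁ : ContDiffOn ℝ (⊤ : ℕ∞) Y₁ J) (hY₂ : ContDiffOn ℝ (⊤ : ℕ∞) Y₂ J)
    (h1 : ∀ y ∈ J,
      Y₂ y = -(exp (-ρ y) * deriv (deriv Y₁) y)
        + deriv ρ y * exp (-ρ y) * ((1 - exp (2 * ρ y)) / (1 + exp (2 * ρ y))) * deriv Y₁ y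
        - ((deriv (deriv ρ) y + deriv ρ y ^ 2 / (1 + exp (2 * ρ y)))
              * exp (ρ y) / (1 + exp (2 * ρ y)) - exp (ρ y)) * Y₁ y)
    (h2 : ∀ y ∈ J,
      deriv Y₂ y = deriv (fun t => exp (ρ t) * Y₁ t) y + exp (-ρ y) * deriv Y₁ y)
    (H : ℝ → ℝ)
    (hH : H = fun y =>
      Y₂ y ^ 2
      + (exp (-ρ y) * Real.sqrt (1 + exp (2 * ρ y)) * deriv Y₁ y
          + (deriv ρ y * exp (ρ y) / Real.sqrt (1 + exp (2 * ρ y))) * Y₁ y) ^ 2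
      - (1 + exp (2 * ρ y)) * Y₁ y ^ 2) :
    ∀ y ∈ J, ∀ y' ∈ J, H y = H y' := by
  -- sqrt-free form of H
  have hHG : H = fun t => Y₂ t ^ 2 + (exp (-(2 * ρ t)) + 1) * deriv Y₁ t ^ 2
      + 2 * deriv ρ t * Y₁ t * deriv Y₁ t
      + (deriv ρ t ^ 2 * exp (2 * ρ t) / (1 + exp (2 * ρ t)) - (1 + exp (2 * ρ t)))
          * Y₁ t ^ 2 := by
    rw [hH]; funext t
    set r := ρ t; set r1 := deriv ρ t; set w := Y₁ t; set w1 := deriv Y₁ t; set z := Y₂ t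
    have hc : (0:ℝ) < 1 + exp (2*r) := by positivity
    have e1 : exp (-(2*r)) = exp (-r) ^ 2 := by rw [← Real.exp_nat_mul]; ring_nf
    have e2 : exp (2*r) = exp r ^ 2 := by rw [← Real.exp_nat_mul]; ring_nf
    have e3 : exp (-r) * exp r = 1 := by rw [← Real.exp_add]; simp
    rw [e1, e2] at *
    set s := Real.sqrt (1 + exp r ^ 2) with hsdef
    have hs : s ^ 2 = 1 + exp r ^ 2 := Real.sq_sqrt (by positivity)
    have hsne : s ≠ 0 := by positivity
    rw [add_sq]
    have t1 : (exp (-r) * s * w1) ^ 2 = (exp (-r) ^ 2 + 1) * w1 ^ 2 := by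
      rw [mul_pow, mul_pow, hs]
      linear_combination (w1 ^ 2 * (exp (-r) * exp r + 1)) * e3
    have t2 : 2 * (exp (-r) * s * w1) * (r1 * exp r / s * w) = 2 * r1 * w1 * w := by
      field_simp
      linear_combination (w1 * r1 * w) * e3
    have t3 : (r1 * exp r / s * w) ^ 2 = r1 ^ 2 * exp r ^ 2 / (1 + exp r ^ 2) * w ^ 2 := by
      rw [mul_pow, div_pow, mul_pow, hs]
    rw [t1, t2, t3]
    ring
  -- the derivative of H vanishes on J
  have key : ∀ x ∈ J, HasDerivWithinAt H 0 J x := by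
    intro x hx
    have hnx : J ∈ nhds x := hJopen.mem_nhds hx
    have hρ' : ContDiffOn ℝ (⊤ : ℕ∞) (deriv ρ) J := hρ.deriv_of_isOpen hJopen (by simp)
    have hY₁' : ContDiffOn ℝ (⊤ : ℕ∞) (deriv Y₁) J := hY₁.deriv_of_isOpen hJopen (by simp)
    have hr : HasDerivAt ρ (deriv ρ x) x :=
      ((hρ.differentiableOn (by simp)).differentiableAt hnx).hasDerivAt
    have hr1 : HasDerivAt (deriv ρ) (deriv (deriv ρ) x) x :=
      ((hρ'.differentiableOn (by simp)).differentiableAt hnx).hasDerivAt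
    have hw : HasDerivAt Y₁ (deriv Y₁ x) x :=
      ((hY₁.differentiableOn (by simp)).differentiableAt hnx).hasDerivAt
    have hw1 : HasDerivAt (deriv Y₁) (deriv (deriv Y₁) x) x :=
      ((hY₁'.differentiableOn (by simp)).differentiableAt hnx).hasDerivAt
    have hz : HasDerivAt Y₂ (deriv Y₂ x) x :=
      ((hY₂.differentiableOn (by simp)).differentiableAt hnx).hasDerivAt
    have he2 : HasDerivAt (fun t => exp (2 * ρ t)) (exp (2 * ρ x) * (2 * deriv ρ x)) x :=
      (hr.const_mul 2).exp
    have hen2 : HasDerivAt (fun t => exp (-(2 * ρ t)))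
        (exp (-(2 * ρ x)) * (-(2 * deriv ρ x))) x := (hr.const_mul 2).neg.exp
    have hc' : HasDerivAt (fun t => 1 + exp (2 * ρ t)) (exp (2 * ρ x) * (2 * deriv ρ x)) x :=
      he2.const_add 1
    have hcne : (1 : ℝ) + exp (2 * ρ x) ≠ 0 := by positivity
    have hA := hz.pow 2
    have hB := (hen2.add_const 1).mul (hw1.pow 2)
    have hC := ((hr1.const_mul 2).mul hw).mul hw1
    have hD := ((((hr1.pow 2).mul he2).div hc' hcne).sub hc').mul (hw.pow 2)
    have hG := ((hA.add hB).add hC).add hD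
    rw [hHG]
    have h0 : HasDerivAt (fun t => Y₂ t ^ 2 + (exp (-(2 * ρ t)) + 1) * deriv Y₁ t ^ 2
        + 2 * deriv ρ t * Y₁ t * deriv Y₁ t
        + (deriv ρ t ^ 2 * exp (2 * ρ t) / (1 + exp (2 * ρ t)) - (1 + exp (2 * ρ t)))
            * Y₁ t ^ 2) 0 x := by
      refine hG.congr_deriv ?_
      simp only [Pi.pow_apply, Pi.mul_apply, Pi.div_apply, Pi.sub_apply, Nat.cast_ofNat, Nat.reduceSub, pow_one]
      have hprod : deriv (fun t => exp (ρ t) * Y₁ t) x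
          = exp (ρ x) * deriv ρ x * Y₁ x + exp (ρ x) * deriv Y₁ x := by
        exact (hr.exp.mul hw).deriv
      have hz2 : deriv Y₂ x = exp (ρ x) * deriv ρ x * Y₁ x + exp (ρ x) * deriv Y₁ x
          + exp (-ρ x) * deriv Y₁ x := by rw [h2 x hx, hprod]
      have e1 : exp (-(2 * ρ x)) = (exp (ρ x))⁻¹ ^ 2 := by
        rw [← Real.exp_neg, ← Real.exp_nat_mul]; ring_nf
      have e2 : exp (2 * ρ x) = exp (ρ x) ^ 2 := by rw [← Real.exp_nat_mul]; ring_nf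
      have e3 : exp (-ρ x) = (exp (ρ x))⁻¹ := Real.exp_neg _
      rw [hz2, h1 x hx, e1, e2, e3]
      have hne : exp (ρ x) ≠ 0 := Real.exp_ne_zero _
      have hcne2 : (1 : ℝ) + exp (ρ x) ^ 2 ≠ 0 := by positivity
      field_simp
      ring
    exact h0.hasDerivWithinAt
  intro y hy y' hy'
  have hconv : Convex ℝ J := hJint.convex
  have h := hconv.norm_image_sub_le_of_norm_hasDerivWithin_le (C := 0)
    (f' := fun _ => (0:ℝ)) (fun x hx => key x hx) (fun x hx => by simp) hy' hy
  have h0 : ‖H y - H y'‖ = 0 := le_antisymm (by simpa using h) (norm_nonneg _)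
  exact sub_eq_zero.mp (norm_eq_zero.mp h0)
end
end

section
/- Let c₀, c₁ ∈ ℝ. Let X₁, X₂ be smooth real functions on an interval of positive real numbers satisfying X₁'' + X₁ + X₂ = c₀ x² − c₁ and (X₂/x)' = (9/(4x³)) X₁', and let Y be a smooth real function on an interval satisfying Y'' + Y = c₀ y² + c₁. Then both G(x) := (X₁ + c₁ + X₂ − c₀x²)² + 4c₀ (X₁ + c₁) + (1 + 9/(4x²)) (X₁')² + ((2/x) X₂ − 4c₀ x) X₁' and H(y) := (Y' − 2c₀ y)² + (Y − c₁ − c₀ y² + 2c₀)² − 4c₀² are constant functions. (Constancy of G and H in Example 2 of Section 3.) -/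
noncomputable section

open Real

lemma const_of_hasDerivAt_zero {s : Set ℝ} (hs : IsOpen s) (hc : Convex ℝ s)
    {f : ℝ → ℝ} (hf : ∀ x ∈ s, HasDerivAt f 0 x) :
    ∀ x ∈ s, ∀ y ∈ s, f x = f y := by
  intro x hx y hy
  refine hc.is_const_of_fderivWithin_eq_zero
    (fun z hz => ((hf z hz).differentiableAt).differentiableWithinAt) (fun z hz => ?_) hx hy
  rw [fderivWithin_of_isOpen hs hz, (hf z hz).hasFDerivAt.fderiv]
  ext; simp

/-- Constancy of `G` and `H` in Example 2 of Section 3. -/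
theorem stmt_9 (c₀ c₁ : ℝ)
    (J : Set ℝ) (hJopen : IsOpen J) (hJint : J.OrdConnected) (hJpos : ∀ x ∈ J, 0 < x)
    (X₁ X₂ : ℝ → ℝ) (hX₁ : ContDiffOn ℝ (⊤ : ℕ∞) X₁ J) (hX₂ : ContDiffOn ℝ (⊤ : ℕ∞) X₂ J)
    (hXeq : ∀ x ∈ J, deriv (deriv X₁) x + X₁ x + X₂ x = c₀ * x ^ 2 - c₁)
    (hX₂eq : ∀ x ∈ J, deriv (fun t => X₂ t / t) x = (9 / (4 * x ^ 3)) * deriv X₁ x)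
    (J' : Set ℝ) (hJ'open : IsOpen J') (hJ'int : J'.OrdConnected)
    (Y : ℝ → ℝ) (hY : ContDiffOn ℝ (⊤ : ℕ∞) Y J')
    (hYeq : ∀ y ∈ J', deriv (deriv Y) y + Y y = c₀ * y ^ 2 + c₁)
    (G H : ℝ → ℝ)
    (hG : G = fun x =>
      (X₁ x + c₁ + X₂ x - c₀ * x ^ 2) ^ 2 + 4 * c₀ * (X₁ x + c₁)
        + (1 + 9 / (4 * x ^ 2)) * deriv X₁ x ^ 2
        + ((2 / x) * X₂ x - 4 * c₀ * x) * deriv X₁ x)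
    (hH : H = fun y =>
      (deriv Y y - 2 * c₀ * y) ^ 2 + (Y y - c₁ - c₀ * y ^ 2 + 2 * c₀) ^ 2 - 4 * c₀ ^ 2) :
    (∀ x ∈ J, ∀ x' ∈ J, G x = G x') ∧ (∀ y ∈ J', ∀ y' ∈ J', H y = H y') := by
  have hX₁d : ContDiffOn ℝ (⊤ : ℕ∞) (deriv X₁) J := hX₁.deriv_of_isOpen hJopen (by simp)
  have hYd : ContDiffOn ℝ (⊤ : ℕ∞) (deriv Y) J' := hY.deriv_of_isOpen hJ'open (by simp)
  constructor
  · refine const_of_hasDerivAt_zero hJopen hJint.convex (fun x hx => ?_)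
    have hx0 : x ≠ 0 := (hJpos x hx).ne'
    have h1 : HasDerivAt X₁ (deriv X₁ x) x :=
      (((hX₁.contDiffAt (hJopen.mem_nhds hx)).differentiableAt (by simp))).hasDerivAt
    have h2 : HasDerivAt (deriv X₁) (deriv (deriv X₁) x) x :=
      (((hX₁d.contDiffAt (hJopen.mem_nhds hx)).differentiableAt (by simp))).hasDerivAt
    have h3 : HasDerivAt X₂ (deriv X₂ x) x :=
      (((hX₂.contDiffAt (hJopen.mem_nhds hx)).differentiableAt (by simp))).hasDerivAt
    have ha'' : deriv (deriv X₁) x = c₀ * x ^ 2 - c₁ - X₁ x - X₂ x := by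
      have := hXeq x hx; linarith
    have hq : deriv (fun t => X₂ t / t) x = (deriv X₂ x * x - X₂ x * 1) / x ^ 2 :=
      (h3.div (hasDerivAt_id' x) hx0).deriv
    have hx2 : (x ^ 2 : ℝ) ≠ 0 := pow_ne_zero 2 hx0
    have hb' : deriv X₂ x = X₂ x / x + 9 / (4 * x ^ 2) * deriv X₁ x := by
      have h := hX₂eq x hx
      rw [hq, div_eq_iff hx2] at h
      have e : 9 / (4 * x ^ 3) * deriv X₁ x * x ^ 2 = 9 / (4 * x) * deriv X₁ x := by
        field_simp
      have h3 : deriv X₂ x * x - X₂ x = 9 / (4 * x) * deriv X₁ x := by linarith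
      have h4 : deriv X₂ x = (X₂ x + 9 / (4 * x) * deriv X₁ x) / x := by
        rw [eq_div_iff hx0]; linarith
      rw [h4]; field_simp
    rw [hG]
    have t1 : HasDerivAt (fun t => X₁ t + c₁ + X₂ t - c₀ * t ^ 2)
        (deriv X₁ x + deriv X₂ x - c₀ * (↑2 * x ^ 1)) x :=
      ((h1.add_const c₁).add h3).sub ((hasDerivAt_pow 2 x).const_mul c₀)
    have t1' := t1.pow 2
    have t2 : HasDerivAt (fun t => 4 * c₀ * (X₁ t + c₁)) (4 * c₀ * deriv X₁ x) x :=
      (h1.add_const c₁).const_mul (4 * c₀)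
    have hden : (4 : ℝ) * x ^ 2 ≠ 0 := by positivity
    have t3a : HasDerivAt (fun t => 1 + 9 / (4 * t ^ 2))
        ((0 * (4 * x ^ 2) - 9 * (4 * (↑2 * x ^ 1))) / (4 * x ^ 2) ^ 2) x :=
      ((hasDerivAt_const x 9).div ((hasDerivAt_pow 2 x).const_mul 4) hden).const_add 1
    have t3 := t3a.mul (h2.pow 2)
    have t4a : HasDerivAt (fun t => (2 / t) * X₂ t - 4 * c₀ * t)
        (((0 * x - 2 * 1) / x ^ 2) * X₂ x + (2 / x) * deriv X₂ x - 4 * c₀ * 1) x :=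
      (((hasDerivAt_const x 2).div (hasDerivAt_id' x) hx0).mul h3).sub
        ((hasDerivAt_id' x).const_mul (4 * c₀))
    have t4 := t4a.mul h2
    have total := ((t1'.add t2).add t3).add t4
    convert total using 1
    case e'_4 => rfl
    case e'_5 => rfl
    case e'_8 => rfl
    rw [ha'', hb', Pi.pow_apply]
    field_simp
    ring
  · refine const_of_hasDerivAt_zero hJ'open hJ'int.convex (fun y hy => ?_)
    have h1 : HasDerivAt Y (deriv Y y) y :=
      (((hY.contDiffAt (hJ'open.mem_nhds hy)).differentiableAt (by simp))).hasDerivAt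
    have h2 : HasDerivAt (deriv Y) (deriv (deriv Y) y) y :=
      (((hYd.contDiffAt (hJ'open.mem_nhds hy)).differentiableAt (by simp))).hasDerivAt
    have hY'' : deriv (deriv Y) y = c₀ * y ^ 2 + c₁ - Y y := by
      have := hYeq y hy; linarith
    rw [hH]
    have t1 : HasDerivAt (fun t => deriv Y t - 2 * c₀ * t)
        (deriv (deriv Y) y - 2 * c₀ * 1) y :=
      h2.sub ((hasDerivAt_id' y).const_mul (2 * c₀))
    have t2 : HasDerivAt (fun t => Y t - c₁ - c₀ * t ^ 2 + 2 * c₀)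
        (deriv Y y - c₀ * (↑2 * y ^ 1)) y :=
      ((h1.sub_const c₁).sub ((hasDerivAt_pow 2 y).const_mul c₀)).add_const (2 * c₀)
    have total := ((t1.pow 2).add (t2.pow 2)).sub_const (4 * c₀ ^ 2)
    convert total using 1
    case e'_4 => rfl
    case e'_5 => rfl
    case e'_8 => rfl
    rw [hY'']
    ring
end
end
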